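/- Let d ≥ 5 be an integer and let h ∈ ℂ[t₀,t₁] be homogeneous of degree d−4 with h(0,1) = 0 (equivalently t₀ divides h) and h(1,0) ≠ 0 (equivalently t₁ does not divide h). Then t₀t₁·(h·V₂ + t₀t₁·V_{d−4}) = t₀²t₁²·V_{d−4} + ℂ·t₀^{d−1}t₁, and this ℂ-subspace has dimension d−2. -/

import Mathlib

open MvPolynomial

noncomputable section

/-- `V n` is the space of homogeneous polynomials of degree `n` in `ℂ[t₀,t₁]`. -/
abbrev V (n : ℕ) : Submodule ℂ (MvPolynomial (Fin 2) ℂ) :=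
  MvPolynomial.homogeneousSubmodule (Fin 2) ℂ n

lemma aux_deg2 (v : Fin 2 →₀ ℕ) : v.degree = v 0 + v 1 := by
  rw [Finsupp.degree_apply, Finset.sum_subset (Finset.subset_univ v.support), Fin.sum_univ_two]
  intro x _ hx
  simpa using hx

lemma aux_mem_V_iff {n : ℕ} {p : MvPolynomial (Fin 2) ℂ} :
    p ∈ V n ↔ ∀ m : Fin 2 →₀ ℕ, coeff m p ≠ 0 → m 0 + m 1 = n := by
  rw [mem_homogeneousSubmodule]
  constructor
  · intro H m hm
    have := H hm
    rwa [Pi.one_def, ← Finsupp.degree_eq_weight_one, aux_deg2] at this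
  · intro H m hm
    rw [Pi.one_def, ← Finsupp.degree_eq_weight_one, aux_deg2]
    exact H m hm

lemma aux_eq_single0 {m : Fin 2 →₀ ℕ} {k : ℕ} (h1 : m 1 = 0) (hk : m 0 = k) :
    m = Finsupp.single 0 k := by
  ext i
  fin_cases i <;> simp [Finsupp.single_apply, h1, hk]

lemma aux_eq_single1 {m : Fin 2 →₀ ℕ} {k : ℕ} (h0 : m 0 = 0) (hk : m 1 = k) :
    m = Finsupp.single 1 k := by
  ext i
  fin_cases i <;> simp [Finsupp.single_apply, h0, hk]

lemma aux_mono_mem_V {a b n : ℕ} (hab : a + b = n) :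
    (X 0 : MvPolynomial (Fin 2) ℂ) ^ a * X 1 ^ b ∈ V n := by
  subst hab
  exact (isHomogeneous_X_pow 0 a).mul (isHomogeneous_X_pow 1 b)

lemma aux_V_eq_span (n : ℕ) :
    V n = Submodule.span ℂ
      (Set.range fun i : Fin (n+1) => (X 0 : MvPolynomial (Fin 2) ℂ) ^ (i : ℕ) * X 1 ^ (n - i)) := by
  apply le_antisymm
  · intro p hp
    have hp' := aux_mem_V_iff.1 hp
    rw [← support_sum_monomial_coeff p]
    apply Submodule.sum_mem
    intro v hv
    have hv' : v 0 + v 1 = n := hp' v (mem_support_iff.1 hv)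
    have hmono : (monomial v) (coeff v p)
        = coeff v p • ((X 0 : MvPolynomial (Fin 2) ℂ) ^ (v 0) * X 1 ^ (v 1)) := by
      rw [monomial_eq, Finsupp.prod_pow, Fin.prod_univ_two, smul_eq_C_mul]
    rw [hmono]
    apply Submodule.smul_mem
    apply Submodule.subset_span
    refine ⟨⟨v 0, by omega⟩, ?_⟩
    show (X 0 : MvPolynomial (Fin 2) ℂ) ^ (v 0) * X 1 ^ (n - v 0) = _
    rw [show n - v 0 = v 1 from by omega]
  · rw [Submodule.span_le]
    rintro _ ⟨i, rfl⟩
    have := i.isLt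
    exact aux_mono_mem_V (by omega)

lemma aux_linind (n : ℕ) :
    LinearIndependent ℂ
      (fun i : Fin (n+1) => (X 0 : MvPolynomial (Fin 2) ℂ) ^ (i : ℕ) * X 1 ^ (n - i)) := by
  have hfun : (fun i : Fin (n+1) => (X 0 : MvPolynomial (Fin 2) ℂ) ^ (i : ℕ) * X 1 ^ (n - i))
      = (basisMonomials (Fin 2) ℂ) ∘
        (fun i : Fin (n+1) => Finsupp.single 0 (i : ℕ) + Finsupp.single 1 (n - i)) := by
    funext i
    simp [coe_basisMonomials, X_pow_eq_monomial, monomial_mul]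
  rw [hfun]
  apply (basisMonomials (Fin 2) ℂ).linearIndependent.comp
  intro i j hij
  have := congrArg (fun f : Fin 2 →₀ ℕ => f 0) hij
  simp [Finsupp.single_apply] at this
  exact Fin.ext this

lemma aux_finrank_V (n : ℕ) : Module.finrank ℂ (V n) = n + 1 := by
  rw [aux_V_eq_span]
  rw [finrank_span_eq_card (aux_linind n)]
  simp

lemma aux_findim_V (n : ℕ) : FiniteDimensional ℂ (V n) := by
  rw [aux_V_eq_span]
  exact FiniteDimensional.span_of_finite ℂ (Set.finite_range _)

lemma aux_X_dvd {p : MvPolynomial (Fin 2) ℂ} {i : Fin 2}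
    (H : ∀ m : Fin 2 →₀ ℕ, coeff m p ≠ 0 → m i ≠ 0) : X i ∣ p := by
  rw [← support_sum_monomial_coeff p]
  apply Finset.dvd_sum
  intro m hm
  rw [X_dvd_monomial]
  exact Or.inr (H m (mem_support_iff.1 hm))

lemma aux_factor (i : Fin 2) {q : MvPolynomial (Fin 2) ℂ} {k : ℕ}
    (H : X i * q ∈ V (k + 1)) : q ∈ V k := by
  rw [aux_mem_V_iff] at H ⊢
  intro m hm
  have := H (Finsupp.single i 1 + m) (by rw [coeff_X_mul]; exact hm)
  fin_cases i <;> simp [Finsupp.add_apply, Finsupp.single_apply] at this <;> omega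

/-- Case 1-1 of Proposition 4.1 ... -/
theorem statement7 (d : ℕ) (hd : 5 ≤ d)
    (h : MvPolynomial (Fin 2) ℂ) (hh : h ∈ V (d - 4))
    (h01 : MvPolynomial.eval ![0, 1] h = 0)
    (h10 : MvPolynomial.eval ![1, 0] h ≠ 0) :
    ((V 2).map (LinearMap.mulLeft ℂ h) ⊔
        (V (d - 4)).map (LinearMap.mulLeft ℂ (X 0 * X 1 : MvPolynomial (Fin 2) ℂ))).map
        (LinearMap.mulLeft ℂ (X 0 * X 1 : MvPolynomial (Fin 2) ℂ))
      = (V (d - 4)).map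
          (LinearMap.mulLeft ℂ ((X 0 : MvPolynomial (Fin 2) ℂ) ^ 2 * X 1 ^ 2)) ⊔
        Submodule.span ℂ {(X 0 : MvPolynomial (Fin 2) ℂ) ^ (d - 1) * X 1} ∧
    Module.finrank ℂ
        ↥(((V 2).map (LinearMap.mulLeft ℂ h) ⊔
            (V (d - 4)).map (LinearMap.mulLeft ℂ (X 0 * X 1 : MvPolynomial (Fin 2) ℂ))).map
            (LinearMap.mulLeft ℂ (X 0 * X 1 : MvPolynomial (Fin 2) ℂ)))
      = d - 2 := by
  have hhV : ∀ m : Fin 2 →₀ ℕ, coeff m h ≠ 0 → m 0 + m 1 = d - 4 := aux_mem_V_iff.1 hh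
  -- the coefficient of X1^(d-4) vanishes
  have hcoeff1 : coeff (Finsupp.single 1 (d - 4)) h = 0 := by
    have : MvPolynomial.eval ![0, 1] h = coeff (Finsupp.single 1 (d - 4)) h := by
      rw [eval_eq']
      rw [Finset.sum_eq_single (Finsupp.single 1 (d - 4))]
      · rw [Fin.prod_univ_two]
        simp
      · intro b hb hbne
        have hb' := hhV b (mem_support_iff.1 hb)
        rw [Fin.prod_univ_two]
        simp only [Matrix.cons_val_zero, Matrix.cons_val_one, Matrix.head_cons]
        by_cases hb0 : b 0 = 0
        · exact absurd (aux_eq_single1 hb0 (by omega)) hbne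
        · simp [zero_pow hb0]
      · intro hne
        rw [notMem_support_iff.1 hne]
        ring
    rw [← this, h01]
  -- the leading coefficient c ≠ 0
  set c := coeff (Finsupp.single 0 (d - 4)) h with hcdef
  have hc : c ≠ 0 := by
    intro h0
    apply h10
    rw [eval_eq']
    apply Finset.sum_eq_zero
    intro b hb
    have hb' := hhV b (mem_support_iff.1 hb)
    rw [Fin.prod_univ_two]
    simp only [Matrix.cons_val_zero, Matrix.cons_val_one, Matrix.head_cons]
    by_cases hb1 : b 1 = 0
    · have hbe : b = Finsupp.single 0 (d - 4) := aux_eq_single0 hb1 (by omega)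
      rw [hbe]
      rw [← hcdef] at *
      simp [h0]
    · simp [zero_pow hb1]
  -- factor h = X0 * h'
  have hX0h : (X 0 : MvPolynomial (Fin 2) ℂ) ∣ h := by
    apply aux_X_dvd
    intro m hm hm0
    have hsum := hhV m hm
    have hme : m = Finsupp.single 1 (d - 4) := aux_eq_single1 hm0 (by omega)
    rw [hme] at hm; exact hm hcoeff1
  obtain ⟨h', hh'⟩ := hX0h
  have hh'V : h' ∈ V (d - 5) := by
    apply aux_factor 0
    rw [← hh', show d - 5 + 1 = d - 4 from by omega]
    exact hh
  -- r := h - c X0^(d-4)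
  set r := h - C c * X 0 ^ (d - 4) with hrdef
  have hCXmem : (C c * X 0 ^ (d - 4) : MvPolynomial (Fin 2) ℂ) ∈ V (d - 4) :=
    isHomogeneous_C_mul_X_pow c 0 (d - 4)
  have hrV : r ∈ V (d - 4) := Submodule.sub_mem _ hh hCXmem
  have hrc : ∀ m : Fin 2 →₀ ℕ, coeff m r ≠ 0 → m 0 + m 1 = d - 4 := aux_mem_V_iff.1 hrV
  have hr0 : coeff (Finsupp.single 0 (d - 4)) r = 0 := by
    rw [hrdef, coeff_sub, X_pow_eq_monomial, C_mul_monomial, coeff_monomial]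
    simp [hcdef]
  have hsne : (Finsupp.single 0 (d - 4) : Fin 2 →₀ ℕ) ≠ Finsupp.single 1 (d - 4) := by
    intro hEq
    have := congrArg (fun f : Fin 2 →₀ ℕ => f 0) hEq
    simp [Finsupp.single_apply] at this
    omega
  have hr1 : coeff (Finsupp.single 1 (d - 4)) r = 0 := by
    rw [hrdef, coeff_sub, X_pow_eq_monomial, C_mul_monomial, coeff_monomial, if_neg hsne,
      hcoeff1]
    ring
  obtain ⟨r1, hr1f⟩ : (X 0 : MvPolynomial (Fin 2) ℂ) ∣ r := by
    apply aux_X_dvd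
    intro m hm hm0
    have hsum := hrc m hm
    have hme : m = Finsupp.single 1 (d - 4) := aux_eq_single1 hm0 (by omega)
    rw [hme] at hm; exact hm hr1
  obtain ⟨u, huf⟩ : (X 1 : MvPolynomial (Fin 2) ℂ) ∣ r1 := by
    apply aux_X_dvd
    intro m hm hm1
    have hco : coeff (Finsupp.single 0 1 + m) r ≠ 0 := by
      rw [hr1f, coeff_X_mul]; exact hm
    have hsum := hrc _ hco
    simp [Finsupp.add_apply, Finsupp.single_apply, hm1] at hsum
    have hme : Finsupp.single 0 1 + m = Finsupp.single 0 (d - 4) := by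
      ext i; fin_cases i <;> simp [Finsupp.single_apply, hm1] <;> try omega
    rw [hme] at hco; exact hco hr0
  set s : MvPolynomial (Fin 2) ℂ := X 0 ^ 2 * u with hsdef
  have hrs : r = X 0 * X 1 * u := by rw [hr1f, huf]; ring
  have hsV : s ∈ V (d - 4) := by
    have hgmem : (X 0 * X 1 : MvPolynomial (Fin 2) ℂ) * r ∈ V (2 + (d - 4)) :=
      ((isHomogeneous_X ℂ 0).mul (isHomogeneous_X ℂ 1)).mul hrV
    have h2 : X 1 * (X 1 * s) ∈ V ((d - 4 + 1) + 1) := by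
      rw [show X 1 * (X 1 * s) = (X 0 * X 1 : MvPolynomial (Fin 2) ℂ) * r from by
        rw [hrs, hsdef]; ring]
      rw [show d - 4 + 1 + 1 = 2 + (d - 4) from by omega]
      exact hgmem
    exact aux_factor 1 (aux_factor 1 h2)
  have hhr : h = C c * X 0 ^ (d - 4) + r := by rw [hrdef]; ring
  have hpow : (X 0 : MvPolynomial (Fin 2) ℂ) ^ 3 * X 0 ^ (d - 4) = X 0 ^ (d - 1) := by
    rw [← pow_add]; congr 1; omega
  have key : (X 0 * X 1 * h) * X 0 ^ 2
      = C c * (X 0 ^ (d - 1) * X 1) + (X 0 * X 1 * (X 0 * X 1)) * s := by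
    rw [hhr, hrs, hsdef, ← hpow]; ring
  have hg2 : ((X 0 : MvPolynomial (Fin 2) ℂ) ^ 2 * X 1 ^ 2) = (X 0 * X 1) * (X 0 * X 1) := by
    ring
  have main : ((V 2).map (LinearMap.mulLeft ℂ h) ⊔
        (V (d - 4)).map (LinearMap.mulLeft ℂ (X 0 * X 1 : MvPolynomial (Fin 2) ℂ))).map
        (LinearMap.mulLeft ℂ (X 0 * X 1 : MvPolynomial (Fin 2) ℂ))
      = (V (d - 4)).map
          (LinearMap.mulLeft ℂ ((X 0 : MvPolynomial (Fin 2) ℂ) ^ 2 * X 1 ^ 2)) ⊔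
        Submodule.span ℂ {(X 0 : MvPolynomial (Fin 2) ℂ) ^ (d - 1) * X 1} := by
    rw [Submodule.map_sup, ← Submodule.map_comp, ← Submodule.map_comp, ← LinearMap.mulLeft_mul,
      ← LinearMap.mulLeft_mul, hg2]
    apply le_antisymm
    · apply sup_le
      · rw [Submodule.map_le_iff_le_comap, aux_V_eq_span 2, Submodule.span_le]
        rintro _ ⟨i, rfl⟩
        rw [SetLike.mem_coe, Submodule.mem_comap, LinearMap.mulLeft_apply]
        fin_cases i
        · show X 0 * X 1 * h * ((X 0:MvPolynomial (Fin 2) ℂ) ^ (0:ℕ) * X 1 ^ (2:ℕ)) ∈ Submodule.map (LinearMap.mulLeft ℂ (X 0 * X 1 * (X 0 * X 1))) (V (d - 4)) ⊔ Submodule.span ℂ {X 0 ^ (d - 1) * X 1}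
          apply Submodule.mem_sup_left
          refine ⟨X 1 * h', ?_, ?_⟩
          · have : (X 1 * h' : MvPolynomial (Fin 2) ℂ).IsHomogeneous (1 + (d - 5)) :=
              (isHomogeneous_X ℂ 1).mul hh'V
            rwa [show 1 + (d - 5) = d - 4 from by omega] at this
          · rw [LinearMap.mulLeft_apply, hh']; ring
        · show X 0 * X 1 * h * ((X 0:MvPolynomial (Fin 2) ℂ) ^ (1:ℕ) * X 1 ^ (1:ℕ)) ∈ Submodule.map (LinearMap.mulLeft ℂ (X 0 * X 1 * (X 0 * X 1))) (V (d - 4)) ⊔ Submodule.span ℂ {X 0 ^ (d - 1) * X 1}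
          apply Submodule.mem_sup_left
          exact ⟨h, hh, by rw [LinearMap.mulLeft_apply]; ring⟩
        · show X 0 * X 1 * h * ((X 0:MvPolynomial (Fin 2) ℂ) ^ (2:ℕ) * X 1 ^ (0:ℕ)) ∈ Submodule.map (LinearMap.mulLeft ℂ (X 0 * X 1 * (X 0 * X 1))) (V (d - 4)) ⊔ Submodule.span ℂ {X 0 ^ (d - 1) * X 1}
          have he : (X 0 * X 1 * h) * ((X 0 : MvPolynomial (Fin 2) ℂ) ^ (2:ℕ) * X 1 ^ (0:ℕ))
              = c • ((X 0 : MvPolynomial (Fin 2) ℂ) ^ (d - 1) * X 1)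
                + (X 0 * X 1 * (X 0 * X 1)) * s := by
            rw [smul_eq_C_mul, ← key]; ring
          rw [he]
          exact Submodule.add_mem _
            (Submodule.mem_sup_right (Submodule.smul_mem _ c (Submodule.mem_span_singleton_self _)))
            (Submodule.mem_sup_left ⟨s, hsV, by rw [LinearMap.mulLeft_apply]⟩)
      · exact le_sup_left
    · apply sup_le
      · exact le_sup_right
      · rw [Submodule.span_le]
        intro x hx
        rw [Set.mem_singleton_iff] at hx; subst hx
        have e1 : (X 0 : MvPolynomial (Fin 2) ℂ) ^ (d - 1) * X 1
            = c⁻¹ • ((X 0 * X 1 * h) * X 0 ^ 2 - (X 0 * X 1 * (X 0 * X 1)) * s) := by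
          rw [key, add_sub_cancel_right, smul_eq_C_mul, ← mul_assoc, ← C_mul,
            inv_mul_cancel₀ hc, C_1, one_mul]
        rw [SetLike.mem_coe, e1]
        apply Submodule.smul_mem
        apply Submodule.sub_mem
        · exact Submodule.mem_sup_left ⟨X 0 ^ 2, isHomogeneous_X_pow 0 2,
            by rw [LinearMap.mulLeft_apply]⟩
        · exact Submodule.mem_sup_right ⟨s, hsV, by rw [LinearMap.mulLeft_apply]⟩
  refine ⟨main, ?_⟩
  rw [main]
  haveI : FiniteDimensional ℂ (V (d - 4)) := aux_findim_V _
  set f := LinearMap.mulLeft ℂ ((X 0 : MvPolynomial (Fin 2) ℂ) ^ 2 * X 1 ^ 2) with hfdef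
  have hgne : ((X 0 : MvPolynomial (Fin 2) ℂ) ^ 2 * X 1 ^ 2) ≠ 0 :=
    mul_ne_zero (pow_ne_zero _ (X_ne_zero _)) (pow_ne_zero _ (X_ne_zero _))
  have hginj : Function.Injective f := by
    intro x y hxy
    exact mul_left_cancel₀ hgne (by simpa [hfdef, LinearMap.mulLeft_apply] using hxy)
  have hrankG : Module.finrank ℂ ((V (d - 4)).map f) = d - 3 := by
    rw [← (Submodule.equivMapOfInjective f hginj (V (d - 4))).finrank_eq, aux_finrank_V]
    omega
  have hmne : ((X 0 : MvPolynomial (Fin 2) ℂ) ^ (d - 1) * X 1) ≠ 0 :=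
    mul_ne_zero (pow_ne_zero _ (X_ne_zero _)) (X_ne_zero _)
  have hrankS : Module.finrank ℂ
      (Submodule.span ℂ {(X 0 : MvPolynomial (Fin 2) ℂ) ^ (d - 1) * X 1}) = 1 :=
    finrank_span_singleton hmne
  have hdisj : (V (d - 4)).map f ⊓
      Submodule.span ℂ {(X 0 : MvPolynomial (Fin 2) ℂ) ^ (d - 1) * X 1} = ⊥ := by
    rw [eq_bot_iff]
    intro x hx
    rw [Submodule.mem_inf] at hx
    obtain ⟨hxG, hxs⟩ := hx
    obtain ⟨a, rfl⟩ := Submodule.mem_span_singleton.1 hxs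
    obtain ⟨p, hp, hep⟩ := hxG
    have hmono : ((X 0 : MvPolynomial (Fin 2) ℂ) ^ 2 * X 1 ^ 2)
        = monomial (Finsupp.single 0 2 + Finsupp.single 1 2) 1 := by
      rw [X_pow_eq_monomial, X_pow_eq_monomial, monomial_mul, one_mul]
    have hmonom : ((X 0 : MvPolynomial (Fin 2) ℂ) ^ (d - 1) * X 1)
        = monomial (Finsupp.single 0 (d - 1) + Finsupp.single 1 1) 1 := by
      rw [show (X 1 : MvPolynomial (Fin 2) ℂ) = X 1 ^ 1 from (pow_one _).symm,
        X_pow_eq_monomial, X_pow_eq_monomial, monomial_mul, one_mul]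
    have h1 : coeff (Finsupp.single 0 (d - 1) + Finsupp.single 1 1) (f p) = 0 := by
      rw [hfdef, LinearMap.mulLeft_apply, hmono, coeff_monomial_mul', if_neg]
      intro hle
      have h2 := hle 1
      simp [Finsupp.single_apply] at h2
    have h2 : coeff (Finsupp.single 0 (d - 1) + Finsupp.single 1 1)
        (a • ((X 0 : MvPolynomial (Fin 2) ℂ) ^ (d - 1) * X 1)) = a := by
      rw [coeff_smul, hmonom, coeff_monomial, if_pos rfl]
      simp
    rw [hep, h2] at h1
    rw [h1, zero_smul]
    exact Submodule.zero_mem ⊥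
  have hsum := Submodule.finrank_sup_add_finrank_inf_eq ((V (d - 4)).map f)
    (Submodule.span ℂ {(X 0 : MvPolynomial (Fin 2) ℂ) ^ (d - 1) * X 1})
  rw [hdisj, finrank_bot, hrankG, hrankS] at hsum
  omega
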